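/- arXiv:1601.07307 — 3 statements merged into one kernel-verified Lean document; each statement's English description precedes it below -/
import Mathlib

section
/- Let M be a countably infinite graph that is ≥k-homogeneous, 1-homogeneous but not 2-homogeneous, with K_∞ ⊆ M. Let q_1 be the 2-orbit of pairs of adjacent vertices lying in a common induced K_∞, and q_2 the other 2-orbit of adjacent pairs (if it exists). Then for each vertex a, there are only finitely many vertices b with (a,b) ∈ q_2. -/
open SimpleGraph

/-- `M` is `n`-homogeneous: every isomorphism between induced subgraphs on
finite vertex sets of size `n` extends to an automorphism of `M`. -/
def IsNHom {V : Type*} (M : SimpleGraph V) (n : ℕ) : Prop :=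
  ∀ (s t : Set V), s.Finite → t.Finite → s.ncard = n → t.ncard = n →
    ∀ f : M.induce s ≃g M.induce t, ∃ g : M ≃g M, ∀ x : s, g x.val = (f x).val

/-- `M` is `≥k`-homogeneous: `n`-homogeneous for all `n ≥ k`. -/
def GeqHom {V : Type*} (M : SimpleGraph V) (k : ℕ) : Prop :=
  ∀ n, k ≤ n → IsNHom M n

/-- `M` is homogeneous: `n`-homogeneous for all `n`. -/
def IsHomogeneous {V : Type*} (M : SimpleGraph V) : Prop :=
  ∀ n, IsNHom M n

/-- The countably infinite complete graph embeds into `M` as an induced subgraph. -/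
def HasKInf {V : Type*} (M : SimpleGraph V) : Prop :=
  Nonempty ((⊤ : SimpleGraph ℕ) ↪g M)

/-- `a` and `b` lie in the same orbit of vertices under `Aut(M)`. -/
def SameOrbit {V : Type*} (M : SimpleGraph V) (a b : V) : Prop :=
  ∃ g : M ≃g M, g a = b

/-- `s` is an orbit of vertices under `Aut(M)`. -/
def IsOrbit {V : Type*} (M : SimpleGraph V) (s : Set V) : Prop :=
  ∃ a, s = {b | SameOrbit M a b}

/-- The ordered pairs `(a,b)` and `(c,d)` lie in the same orbit under `Aut(M)`. -/
def SamePairOrbit {V : Type*} (M : SimpleGraph V) (a b c d : V) : Prop :=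
  ∃ g : M ≃g M, g a = c ∧ g b = d

/-- `a` and `b` lie in a common induced copy of `K_∞`. -/
def InCommonKInf {V : Type*} (M : SimpleGraph V) (a b : V) : Prop :=
  ∃ f : (⊤ : SimpleGraph ℕ) ↪g M, a ∈ Set.range f ∧ b ∈ Set.range f

/-- The 2-orbit `q₁`: adjacent pairs lying in a common induced `K_∞`. -/
def Q1Rel {V : Type*} (M : SimpleGraph V) (a b : V) : Prop :=
  M.Adj a b ∧ InCommonKInf M a b

/-- The 2-orbit `q₂`: adjacent pairs not lying in a common induced `K_∞`. -/
def Q2Rel {V : Type*} (M : SimpleGraph V) (a b : V) : Prop :=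
  M.Adj a b ∧ ¬ InCommonKInf M a b

/-- The 2-orbit `p₁`: non-adjacent pairs `(a,b)` such that `b` is adjacent to at
most `k-1` vertices of any induced `K_∞` containing `a`. -/
def P1Rel {V : Type*} (M : SimpleGraph V) (k : ℕ) (a b : V) : Prop :=
  a ≠ b ∧ ¬ M.Adj a b ∧
    ∀ f : (⊤ : SimpleGraph ℕ) ↪g M, a ∈ Set.range f →
      {c | c ∈ Set.range f ∧ M.Adj b c}.Finite ∧
      {c | c ∈ Set.range f ∧ M.Adj b c}.ncard ≤ k - 1

/-- The 2-orbit `p₂`: the remaining non-adjacent pairs of distinct vertices. -/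
def P2Rel {V : Type*} (M : SimpleGraph V) (k : ℕ) (a b : V) : Prop :=
  a ≠ b ∧ ¬ M.Adj a b ∧ ¬ P1Rel M k a b

/-- The graph `G_t` on `ℤ × {1,…,t}`, with `(a,i)` adjacent to `(b,j)` iff `a ≠ b`. -/
def Gt (t : ℕ) : SimpleGraph (ℤ × Fin t) where
  Adj x y := x.1 ≠ y.1
  symm := ⟨fun _ _ h => Ne.symm h⟩
  loopless := ⟨fun _ h => h rfl⟩

/-- The graph `H_{t,2}`: two copies of `G_t`, with `(a,i)` in the first copy
adjacent to `(b,j)` in the second copy iff `a = b`. -/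
def Ht2 (t : ℕ) : SimpleGraph ((ℤ × Fin t) ⊕ (ℤ × Fin t)) where
  Adj x y := match x, y with
    | .inl a, .inl b => a.1 ≠ b.1
    | .inr a, .inr b => a.1 ≠ b.1
    | .inl a, .inr b => a.1 = b.1
    | .inr a, .inl b => a.1 = b.1
  symm := by
    constructor
    rintro (a | a) (b | b) h <;> simp_all <;> omega
  loopless := by
    constructor
    rintro (a | a) h <;> exact h rfl

/-- The graph `H_{1,2}`: two disjoint copies of `K_∞` joined by a perfect matching. -/
def H12 : SimpleGraph (ℤ × Fin 2) where
  Adj x y := (x.2 = y.2 ∧ x.1 ≠ y.1) ∨ (x.1 = y.1 ∧ x.2 ≠ y.2)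
  symm := by
    constructor
    rintro x y (⟨h1, h2⟩ | ⟨h1, h2⟩)
    · exact Or.inl ⟨h1.symm, h2.symm⟩
    · exact Or.inr ⟨h1.symm, h2.symm⟩
  loopless := by
    constructor
    rintro x (⟨_, h⟩ | ⟨_, h⟩) <;> exact h rfl

/-!
If `a` had infinitely many `q₂`-neighbours, a greedy (Ramsey-type) construction shows that either
they contain an infinite clique, which together with `a` is a `K_∞` through a `q₂`-edge, or some
`q₂`-neighbour `b` of `a` is non-adjacent to infinitely many others. In the second case let `M`
be `n`-homogeneous with `n ≥ 2`, pick `n - 2` of those non-neighbours as a set `B`, and pick `c`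
in a `K_∞` through `a` outside `B ∪ {b}` and not adjacent to any vertex of `B`; this is possible
because a `q₂`-neighbour of `a` sees only finitely many vertices of such a `K_∞`. Then `b` and
`c` have the same adjacencies to `{a} ∪ B`, so the swap of `b` and `c` extends to an automorphism
fixing `a`; it carries the `K_∞` through `a` and `c` onto one through `a` and `b`.
-/

section
variable {V : Type*} {M : SimpleGraph V}

lemma isClique_range_topEmbedding {ι : Type*} (F : (⊤ : SimpleGraph ι) ↪g M) :
    M.IsClique (Set.range F) :=
  isClique_range_copy_top F.toCopy

lemma inCommonKInf_of_isClique {s : Set V} (hs : M.IsClique s) (hinf : s.Infinite) {a b : V}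
    (ha : a ∈ s) (hb : b ∈ s) (hab : a ≠ b) : InCommonKInf M a b := by
  let σ := (hinf.sdiff (Set.toFinite {a, b})).natEmbedding
  let e : ℕ → V
    | 0 => a
    | 1 => b
    | n + 2 => σ n
  have he_mem : ∀ n, e n ∈ s := by
    rintro (_ | _ | n)
    exacts [ha, hb, (σ n).2.1]
  have he_inj : Function.Injective e := by
    have hσ : ∀ n, (σ n : V) ≠ a ∧ (σ n : V) ≠ b := fun n => by
      simpa [not_or] using (σ n).2.2
    rintro (_ | _ | i) (_ | _ | j) h <;>
      simp_all [e, Subtype.ext_iff.symm.trans σ.injective.eq_iff]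
  refine ⟨⟨⟨e, he_inj⟩, fun {i j} => ?_⟩, ⟨0, rfl⟩, ⟨1, rfl⟩⟩
  simp only [Function.Embedding.coeFn_mk, top_adj]
  exact ⟨fun h hij => h.ne (congrArg e hij),
    fun hij => hs (he_mem i) (he_mem j) (he_inj.ne hij)⟩

lemma IsNHom.exists_aut_eqOn {n : ℕ} (hM : IsNHom M n) {s : Set V} (hs : s.Finite)
    (hcard : s.ncard = n) (φ : V ≃ V)
    (hφ : ∀ x ∈ s, ∀ y ∈ s, M.Adj (φ x) (φ y) ↔ M.Adj x y) :
    ∃ g : M ≃g M, ∀ x ∈ s, g x = φ x := by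
  let f : M.induce s ≃g M.induce (φ '' s) :=
    ⟨Equiv.Set.image φ s φ.injective, fun {x y} => hφ x x.2 y y.2⟩
  obtain ⟨g, hg⟩ := hM s (φ '' s) hs (hs.image φ) hcard
    ((Set.ncard_image_of_injective s φ.injective).trans hcard) f
  exact ⟨g, fun x hx => hg ⟨x, hx⟩⟩

lemma IsNHom.exists_aut_apply_eq (h1 : IsNHom M 1) (u v : V) : ∃ g : M ≃g M, g u = v := by
  classical
  obtain ⟨g, hg⟩ := h1.exists_aut_eqOn (Set.finite_singleton u) (Set.ncard_singleton u)
    (Equiv.swap u v) (by rintro x rfl y rfl; simp)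
  exact ⟨g, (hg u rfl).trans (Equiv.swap_apply_left u v)⟩

lemma IsNHom.exists_aut_fixing_of_adj_iff {n : ℕ} (hM : IsNHom M n) {A : Set V}
    (hA : A.Finite) (hcard : A.ncard + 1 = n) {b c : V} (hb : b ∉ A) (hc : c ∉ A)
    (hbc : ∀ x ∈ A, M.Adj x b ↔ M.Adj x c) : ∃ g : M ≃g M, g c = b ∧ ∀ x ∈ A, g x = x := by
  classical
  have hfix : ∀ x ∈ A, Equiv.swap c b x = x := fun x hx =>
    Equiv.swap_apply_of_ne_of_ne (ne_of_mem_of_not_mem hx hc) (ne_of_mem_of_not_mem hx hb)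
  have hφ : ∀ x ∈ insert c A, ∀ y ∈ insert c A,
      M.Adj (Equiv.swap c b x) (Equiv.swap c b y) ↔ M.Adj x y := by
    rintro x (rfl | hx) y (rfl | hy)
    · simp
    · rw [Equiv.swap_apply_left, hfix y hy, M.adj_comm, M.adj_comm x]
      exact hbc y hy
    · rw [Equiv.swap_apply_left, hfix x hx]
      exact hbc x hx
    · rw [hfix x hx, hfix y hy]
  obtain ⟨g, hg⟩ := hM.exists_aut_eqOn (hA.insert c)
    ((Set.ncard_insert_of_notMem hc hA).trans hcard) (Equiv.swap c b) hφ
  refine ⟨g, ?_, fun x hx => ?_⟩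
  · rw [hg c (Set.mem_insert c A), Equiv.swap_apply_left]
  · rw [hg x (Set.mem_insert_of_mem c hx), hfix x hx]

lemma IsNHom.exists_kInf_mem (h1 : IsNHom M 1) (hK : HasKInf M) (a : V) :
    ∃ F : (⊤ : SimpleGraph ℕ) ↪g M, a ∈ Set.range F := by
  obtain ⟨F⟩ := hK
  obtain ⟨g, hg⟩ := h1.exists_aut_apply_eq (F 0) a
  exact ⟨g.toEmbedding.comp F, 0, hg⟩

lemma exists_infinite_isClique_of_finite_nonadj {N : Set V} (hN : N.Infinite)
    (h : ∀ b ∈ N, {x ∈ N | x ≠ b ∧ ¬ M.Adj b x}.Finite) :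
    ∃ s ⊆ N, M.IsClique s ∧ s.Infinite := by
  have : Std.Symm M.Adj := M.symm
  obtain ⟨f, hfN, hf⟩ := exists_seq_of_forall_finset_exists' (· ∈ N) M.Adj fun t ht => by
    have hbad : (⋃ x ∈ t, insert x {y ∈ N | y ≠ x ∧ ¬ M.Adj x y}).Finite :=
      t.finite_toSet.biUnion fun x hx => (h x (ht x hx)).insert x
    obtain ⟨y, hyN, hy⟩ := (hN.sdiff hbad).nonempty
    refine ⟨y, hyN, fun x hx => by_contra fun hxy => hy (Set.mem_biUnion hx ?_)⟩
    by_cases hyx : y = x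
    exacts [Or.inl hyx, Or.inr ⟨hyN, hyx, hxy⟩]
  refine ⟨Set.range f, Set.range_subset_iff.2 hfN, ?_, Set.infinite_range_of_injective ?_⟩
  · rintro _ ⟨i, rfl⟩ _ ⟨j, rfl⟩ hne
    exact hf fun hij => hne (congrArg f hij)
  · exact fun i j hij => by_contra fun hne => (hf hne).ne hij

lemma Q2Rel.finite_adj_of_mem_range {a b : V} (hab : Q2Rel M a b)
    {F : (⊤ : SimpleGraph ℕ) ↪g M} (ha : a ∈ Set.range F) :
    {c | c ∈ Set.range F ∧ M.Adj b c}.Finite := by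
  by_contra hinf
  have hclique : M.IsClique (insert b {c | c ∈ Set.range F ∧ M.Adj b c}) :=
    isClique_insert.2 ⟨(isClique_range_topEmbedding F).subset fun c hc => hc.1,
      fun c hc _ => hc.2⟩
  exact hab.2 (inCommonKInf_of_isClique hclique
    (Set.Infinite.mono (Set.subset_insert _ _) hinf)
    (Set.mem_insert_of_mem b ⟨ha, hab.1.symm⟩) (Set.mem_insert b _) hab.1.ne)

lemma Q2Rel.finite_of_isClique {a : V} {s : Set V} (hs : M.IsClique s)
    (hq : ∀ b ∈ s, Q2Rel M a b) : s.Finite := by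
  by_contra hinf
  obtain ⟨b, hb⟩ := Set.Infinite.nonempty hinf
  have hclique : M.IsClique (insert a s) := isClique_insert.2 ⟨hs, fun c hc _ => (hq c hc).1⟩
  exact (hq b hb).2 (inCommonKInf_of_isClique hclique
    (Set.Infinite.mono (Set.subset_insert a s) hinf)
    (Set.mem_insert a s) (Set.mem_insert_of_mem a hb) (hq b hb).1.ne)

lemma Q2Rel.finite_nonadj {n : ℕ} (hn : 2 ≤ n) (hM : IsNHom M n)
    {F : (⊤ : SimpleGraph ℕ) ↪g M} {a b : V} (ha : a ∈ Set.range F) (hab : Q2Rel M a b) :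
    {x | Q2Rel M a x ∧ x ≠ b ∧ ¬ M.Adj b x}.Finite := by
  by_contra hinf
  obtain ⟨B, hBsub, hBfin, hBcard⟩ := Set.Infinite.exists_subset_ncard_eq hinf (n - 2)
  obtain ⟨c, hcF, hcX, hcB⟩ : ∃ c ∈ Set.range F, c ∉ insert a (insert b B) ∧
      ∀ x ∈ B, ¬ M.Adj x c := by
    have hbad :
        (insert a (insert b B) ∪ ⋃ x ∈ B, {c | c ∈ Set.range F ∧ M.Adj x c}).Finite :=
      ((hBfin.insert b).insert a).union
        (hBfin.biUnion fun x hx => (hBsub hx).1.finite_adj_of_mem_range ha)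
    obtain ⟨c, hcF, hc⟩ := ((Set.infinite_range_of_injective F.injective).sdiff hbad).nonempty
    exact ⟨c, hcF, fun h => hc (Or.inl h),
      fun x hx hxc => hc (Or.inr (Set.mem_biUnion hx ⟨hcF, hxc⟩))⟩
  have haB : a ∉ B := fun h => (hBsub h).1.1.ne rfl
  have hbA : b ∉ insert a B := by
    rintro (h | h)
    exacts [hab.1.ne h.symm, (hBsub h).2.1 rfl]
  have hcA : c ∉ insert a B := fun h => hcX (Set.insert_subset_insert (Set.subset_insert b B) h)
  have hbc : ∀ x ∈ insert a B, M.Adj x b ↔ M.Adj x c := by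
    rintro x (rfl | hx)
    · exact iff_of_true hab.1
        (isClique_range_topEmbedding F ha hcF fun h => hcA (h ▸ Set.mem_insert x B))
    · exact iff_of_false (fun h => (hBsub hx).2.2 h.symm) (hcB x hx)
  obtain ⟨g, hgc, hgA⟩ := hM.exists_aut_fixing_of_adj_iff (hBfin.insert a)
    (by rw [Set.ncard_insert_of_notMem haB hBfin, hBcard]; omega) hbA hcA hbc
  obtain ⟨i, rfl⟩ := ha
  obtain ⟨j, rfl⟩ := hcF
  exact hab.2 ⟨g.toEmbedding.comp F, ⟨i, hgA _ (Set.mem_insert _ B)⟩, ⟨j, hgc⟩⟩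

end

theorem stmt8_general {V : Type} (M : SimpleGraph V) (k : ℕ)
    (hM : GeqHom M k) (h1 : IsNHom M 1) (hK : HasKInf M) :
    ∀ a : V, {b | Q2Rel M a b}.Finite := by
  intro a
  by_contra hinf
  obtain ⟨F, ha⟩ := h1.exists_kInf_mem hK a
  obtain ⟨s, hsN, hs, hsinf⟩ := exists_infinite_isClique_of_finite_nonadj hinf fun b hb =>
    Q2Rel.finite_nonadj (le_max_right k 2) (hM (max k 2) (le_max_left k 2)) ha hb
  exact hsinf (Q2Rel.finite_of_isClique hs hsN)

theorem stmt8 {V : Type} [Countable V] [Infinite V] (M : SimpleGraph V) (k : ℕ)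
    (hM : GeqHom M k) (h1 : IsNHom M 1) (h2 : ¬ IsNHom M 2) (hK : HasKInf M) :
    ∀ a : V, {b | Q2Rel M a b}.Finite :=
  stmt8_general M k hM h1 hK
end

section
/- For every t ≥ 2, the graph H_{t,1} (the disjoint union of two copies of G_t) is ≥(2t+1)-homogeneous: every isomorphism between finite induced subgraphs of size at least 2t+1 extends to an automorphism of H_{t,1}. -/
open SimpleGraph

/-!
Among more than `2t` vertices of `H_{t,1}` two are adjacent, since each copy of `G_t` holds at
most `t` pairwise non-adjacent vertices. In a finite induced subgraph `S` containing an edge, two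
vertices lie in the same copy iff they are equal, adjacent, have a common neighbour in `S`, or are
both isolated in `S`: every vertex in the copy of the edge is adjacent to one of its endpoints.
This description is intrinsic to `S`, so an isomorphism between two such induced subgraphs
preserves or swaps the copies. After composing with the swap it splits into partial isomorphisms
of the two copies of `G_t`, and these extend to automorphisms: permute the parts, then permute
the vertices inside each part.
-/

namespace SimpleGraph

variable {V W : Type*}

def IsUltrahomogeneous (G : SimpleGraph V) : Prop :=
  ∀ s : Set V, s.Finite → ∀ φ : G.induce s ↪g G, ∃ g : G ≃g G, ∀ x : s, g x = φ x

def CloseOrIsolated (G : SimpleGraph V) (x y : V) : Prop :=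
  x = y ∨ G.Adj x y ∨ (∃ z, G.Adj x z ∧ G.Adj z y) ∨ ((∀ z, ¬ G.Adj x z) ∧ ∀ z, ¬ G.Adj y z)

theorem CloseOrIsolated.symm {G : SimpleGraph V} {x y : V} (h : G.CloseOrIsolated x y) :
    G.CloseOrIsolated y x := by
  rcases h with rfl | h | ⟨z, hxz, hzy⟩ | ⟨hx, hy⟩
  exacts [.inl rfl, .inr (.inl h.symm), .inr (.inr (.inl ⟨z, hzy.symm, hxz.symm⟩)),
    .inr (.inr (.inr ⟨hy, hx⟩))]

theorem Iso.closeOrIsolated_iff {G : SimpleGraph V} {G' : SimpleGraph W} (φ : G ≃g G')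
    {x y : V} : G'.CloseOrIsolated (φ x) (φ y) ↔ G.CloseOrIsolated x y := by
  simp [CloseOrIsolated, φ.surjective.exists, φ.surjective.forall, φ.injective.eq_iff,
    φ.map_adj_iff]

theorem isLeft_eq_of_sum_adj {G : SimpleGraph V} {G' : SimpleGraph W} {x y : V ⊕ W}
    (h : (G ⊕g G').Adj x y) : x.isLeft = y.isLeft := by
  rcases x with x | x <;> rcases y with y | y <;> simp_all

theorem IsUltrahomogeneous.exists_sumCongr {G : SimpleGraph V} {G' : SimpleGraph W}
    (hG : G.IsUltrahomogeneous) (hG' : G'.IsUltrahomogeneous) {s : Set (V ⊕ W)} (hs : s.Finite)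
    (φ : (G ⊕g G').induce s ↪g G ⊕g G') (hφ : ∀ x, (φ x).isLeft = x.1.isLeft) :
    ∃ (g : G ≃g G) (g' : G' ≃g G'), ∀ x : s, Iso.sumCongr g g' x = φ x := by
  have hl (v : Sum.inl ⁻¹' s) : ∃ v', φ ⟨.inl v, v.2⟩ = .inl v' := Sum.isLeft_iff.mp (hφ _)
  have hr (w : Sum.inr ⁻¹' s) : ∃ w', φ ⟨.inr w, w.2⟩ = .inr w' :=
    Sum.isRight_iff.mp (Sum.not_isLeft.mp (by simp [hφ]))
  choose φl hφl using hl
  choose φr hφr using hr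
  let ψl : G.induce (Sum.inl ⁻¹' s) ↪g G :=
    { toFun := φl
      inj' := fun a b hab => Subtype.ext <| by
        simpa using φ.injective (by rw [hφl, hφl, hab] : φ ⟨_, a.2⟩ = φ ⟨_, b.2⟩)
      map_rel_iff' := fun {a b} => show G.Adj (φl a) (φl b) ↔ _ by
        simpa [hφl] using φ.map_adj_iff (v := ⟨.inl a, a.2⟩) (w := ⟨.inl b, b.2⟩) }
  let ψr : G'.induce (Sum.inr ⁻¹' s) ↪g G' :=
    { toFun := φr
      inj' := fun a b hab => Subtype.ext <| by
        simpa using φ.injective (by rw [hφr, hφr, hab] : φ ⟨_, a.2⟩ = φ ⟨_, b.2⟩)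
      map_rel_iff' := fun {a b} => show G'.Adj (φr a) (φr b) ↔ _ by
        simpa [hφr] using φ.map_adj_iff (v := ⟨.inr a, a.2⟩) (w := ⟨.inr b, b.2⟩) }
  obtain ⟨g, hg⟩ := hG _ (hs.preimage Sum.inl_injective.injOn) ψl
  obtain ⟨g', hg'⟩ := hG' _ (hs.preimage Sum.inr_injective.injOn) ψr
  refine ⟨g, g', ?_⟩
  rintro ⟨v | w, hx⟩
  · simp only [Iso.sumCongr_apply, Sum.map_inl, hg ⟨v, hx⟩]
    exact (hφl ⟨v, hx⟩).symm
  · simp only [Iso.sumCongr_apply, Sum.map_inr, hg' ⟨w, hx⟩]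
    exact (hφr ⟨w, hx⟩).symm

theorem IsUltrahomogeneous.exists_extend_sum_self {G : SimpleGraph V} (hG : G.IsUltrahomogeneous)
    {s : Set (V ⊕ V)} (hs : s.Finite) (φ : (G ⊕g G).induce s ↪g G ⊕g G)
    (hφ : ∀ x y, (φ x).isLeft = (φ y).isLeft ↔ x.1.isLeft = y.1.isLeft) :
    ∃ g : G ⊕g G ≃g G ⊕g G, ∀ x : s, g x = φ x := by
  obtain ⟨σ, hσ⟩ : ∃ σ : G ⊕g G ≃g G ⊕g G, ∀ x, (σ (φ x)).isLeft = x.1.isLeft := by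
    by_cases hflip : ∃ x₀, (φ x₀).isLeft ≠ x₀.1.isLeft
    · obtain ⟨x₀, hx₀⟩ := hflip
      refine ⟨Iso.sumComm, fun x => ?_⟩
      have := hφ x x₀
      rw [Iso.sumComm_apply, Sum.isLeft_swap, ← Sum.bnot_isLeft]
      revert this hx₀
      cases (φ x).isLeft <;> cases (φ x₀).isLeft <;> cases x.1.isLeft <;> cases x₀.1.isLeft <;>
        decide
    · push Not at hflip
      exact ⟨Iso.refl, hflip⟩
  obtain ⟨g, g', hg⟩ := hG.exists_sumCongr hG hs (σ.toEmbedding.comp φ) hσ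
  exact ⟨(Iso.sumCongr g g').trans σ.symm, fun x => by simp [hg x]⟩

end SimpleGraph

namespace Gt

variable {t : ℕ}

def isoProdShear (σ : ℤ ≃ ℤ) (τ : ℤ → Fin t ≃ Fin t) : Gt t ≃g Gt t where
  toEquiv := σ.prodShear τ
  map_rel_iff' := σ.injective.ne_iff

theorem isUltrahomogeneous (t : ℕ) : (Gt t).IsUltrahomogeneous := by
  intro s hs φ
  have hpart (x y : s) : (φ x).1 = (φ y).1 ↔ x.1.1 = y.1.1 := not_iff_not.mp φ.map_adj_iff
  have hσ₀ (a : ℤ) : ∃ b : ℤ, ∀ x : s, x.1.1 = a → (φ x).1 = b := by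
    by_cases ha : ∃ x : s, x.1.1 = a
    · obtain ⟨x, rfl⟩ := ha
      exact ⟨(φ x).1, fun y hy => (hpart y x).2 hy⟩
    · exact ⟨a, fun x hx => absurd ⟨x, hx⟩ ha⟩
  choose σ₀ hσ₀ using hσ₀
  have hσ₀inj : Set.InjOn σ₀ (Prod.fst '' s) := by
    rintro _ ⟨x, hx, rfl⟩ _ ⟨y, hy, rfl⟩ hxy
    rw [← hσ₀ _ ⟨x, hx⟩ rfl, ← hσ₀ _ ⟨y, hy⟩ rfl] at hxy
    exact (hpart ⟨x, hx⟩ ⟨y, hy⟩).1 hxy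
  obtain ⟨σ, hσ⟩ := Cardinal.extend_function_of_lt ⟨_, hσ₀inj.injective⟩
    (by rw [Cardinal.mk_int]; exact Cardinal.lt_aleph0_iff_set_finite.2 (hs.image _))
    ⟨Equiv.refl ℤ⟩
  have hτ (a : ℤ) : ∃ τ : Fin t ≃ Fin t, ∀ i (hi : (a, i) ∈ s), τ i = (φ ⟨(a, i), hi⟩).2 := by
    obtain ⟨τ, hτ⟩ := Cardinal.extend_function_finite (s := {i | (a, i) ∈ s})
      ⟨fun i => (φ ⟨(a, i), i.2⟩).2, fun i j hij => by
        have := φ.injective (Prod.ext ((hpart ⟨_, i.2⟩ ⟨_, j.2⟩).2 rfl) hij)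
        exact Subtype.ext (by simpa using this)⟩ ⟨Equiv.refl _⟩
    exact ⟨τ, fun i hi => hτ ⟨i, hi⟩⟩
  choose τ hτ using hτ
  refine ⟨isoProdShear σ τ, fun ⟨⟨a, i⟩, hx⟩ => Prod.ext ?_ (hτ a i hx)⟩
  exact (hσ ⟨a, (a, i), hx, rfl⟩).trans (hσ₀ a ⟨_, hx⟩ rfl).symm

theorem adj_or_adj_of_adj {p q : ℤ × Fin t} (x : ℤ × Fin t) (h : (Gt t).Adj p q) :
    (Gt t).Adj p x ∨ (Gt t).Adj q x := by
  have : p.1 ≠ q.1 := h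
  show p.1 ≠ x.1 ∨ q.1 ≠ x.1
  omega

theorem sum_adj_or_adj_of_adj {p q x : (ℤ × Fin t) ⊕ (ℤ × Fin t)}
    (h : (Gt t ⊕g Gt t).Adj p q) (hx : p.isLeft = x.isLeft) :
    (Gt t ⊕g Gt t).Adj p x ∨ (Gt t ⊕g Gt t).Adj q x := by
  rcases p with p | p <;> rcases q with q | q <;> rcases x with x | x <;>
    simp_all [adj_or_adj_of_adj]

theorem sum_exists_adj_of_lt_ncard {w : Set ((ℤ × Fin t) ⊕ (ℤ × Fin t))}
    (hw : 2 * t < w.ncard) : ∃ p ∈ w, ∃ q ∈ w, (Gt t ⊕g Gt t).Adj p q := by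
  by_contra! h
  have hinj : Set.InjOn (Sum.map Prod.snd Prod.snd) w := by
    rintro (x | x) hx (y | y) hy hxy <;> simp only [Sum.map_inl, Sum.map_inr, reduceCtorEq,
      Sum.inl.injEq, Sum.inr.injEq] at hxy ⊢
    all_goals
      have hxy₁ : x.1 = y.1 := not_not.mp (h _ hx _ hy)
      exact Prod.ext hxy₁ hxy
  have := hinj.ncard_image ▸ Set.ncard_le_card (Sum.map Prod.snd Prod.snd '' w)
  simp only [Nat.card_eq_fintype_card, Fintype.card_sum, Fintype.card_fin] at this
  omega

theorem sum_closeOrIsolated_induce_iff {w : Set ((ℤ × Fin t) ⊕ (ℤ × Fin t))}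
    (hw : ∃ p ∈ w, ∃ q ∈ w, (Gt t ⊕g Gt t).Adj p q) (x y : w) :
    ((Gt t ⊕g Gt t).induce w).CloseOrIsolated x y ↔ x.1.isLeft = y.1.isLeft := by
  constructor
  · rintro (rfl | h | ⟨z, hxz, hzy⟩ | ⟨hx, hy⟩)
    · rfl
    · exact isLeft_eq_of_sum_adj h
    · exact (isLeft_eq_of_sum_adj hxz).trans (isLeft_eq_of_sum_adj hzy)
    · obtain ⟨p, hp, q, hq, hpq⟩ := hw
      have off (v : w) (hv : ∀ z, ¬ ((Gt t ⊕g Gt t).induce w).Adj v z) :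
          v.1.isLeft ≠ p.isLeft := fun h =>
        (sum_adj_or_adj_of_adj hpq h.symm).elim (fun h' => hv ⟨p, hp⟩ h'.symm)
          (fun h' => hv ⟨q, hq⟩ h'.symm)
      have hx' := off x hx
      have hy' := off y hy
      revert hx' hy'
      cases x.1.isLeft <;> cases y.1.isLeft <;> cases p.isLeft <;> decide
  · have close (a b : w) (hab : a.1.isLeft = b.1.isLeft)
        (ha : ∃ z, ((Gt t ⊕g Gt t).induce w).Adj a z) :
        ((Gt t ⊕g Gt t).induce w).CloseOrIsolated a b := by
      obtain ⟨z, haz⟩ := ha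
      rcases sum_adj_or_adj_of_adj haz.symm ((isLeft_eq_of_sum_adj haz).symm.trans hab) with
        h | h
      exacts [.inr (.inr (.inl ⟨z, haz, h⟩)), .inr (.inl h)]
    intro hxy
    by_cases hx : ∃ z, ((Gt t ⊕g Gt t).induce w).Adj x z
    · exact close x y hxy hx
    by_cases hy : ∃ z, ((Gt t ⊕g Gt t).induce w).Adj y z
    · exact (close y x hxy.symm hy).symm
    push Not at hx hy
    exact .inr (.inr (.inr ⟨hx, hy⟩))

end Gt

theorem stmt15_general (t : ℕ) :
    GeqHom (Gt t ⊕g Gt t) (2 * t + 1) := by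
  intro n hn s u hs _ hsn hun f
  let φ := (Embedding.induce u).comp f.toEmbedding
  have hsides (x y : s) : (φ x).isLeft = (φ y).isLeft ↔ x.1.isLeft = y.1.isLeft := by
    rw [← Gt.sum_closeOrIsolated_induce_iff (Gt.sum_exists_adj_of_lt_ncard (by omega)),
      ← f.closeOrIsolated_iff,
      Gt.sum_closeOrIsolated_induce_iff (Gt.sum_exists_adj_of_lt_ncard (by omega))]
    rfl
  exact (Gt.isUltrahomogeneous t).exists_extend_sum_self hs φ hsides

theorem stmt15 (t : ℕ) (ht : 2 ≤ t) :
    GeqHom (Gt t ⊕g Gt t) (2 * t + 1) :=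
  stmt15_general t
end

section
/- Let k ∈ ℕ. Every countably infinite graph M that is ≥k-homogeneous, 1-homogeneous and 2-homogeneous is homogeneous, i.e., every isomorphism between finite induced subgraphs of M extends to an automorphism of M. -/
open SimpleGraph

/-!
An isomorphism between finite induced subgraphs is extended one vertex at a time, so it suffices
to move a vertex `c` to a vertex `c'` by an automorphism fixing a finite set `F` of vertices, each
adjacent to both or to neither of `c` and `c'`. If infinitely many vertices agree on `c` and `c'`
in this sense, enlarge `F` by such vertices to size at least `k` and use `≥k`-homogeneity.
Otherwise, by 2-homogeneity every pair with the adjacency type of `(c, c')` has only finitely many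
agreeing vertices. Passing to the complement if necessary, this holds for every edge of a vertex-
and arc-transitive graph; such a graph is triangle-free, non-adjacent vertices have almost
equal neighbourhoods, and the neighbourhoods of the ends of an edge almost cover all vertices.
A vertex agreeing on an edge would then have a cofinite neighbourhood, which is impossible since
it is disjoint from the infinite neighbourhood of any of its neighbours. So `F` is empty, and
1-homogeneity suffices.
-/

namespace SimpleGraph

variable {V W : Type*} {G : SimpleGraph V} {H : SimpleGraph W} {u v w x y c c' : V}

variable (G) in
def agreeSet (u v : V) : Set V :=
  {x | x ≠ u ∧ x ≠ v ∧ (G.Adj x u ↔ G.Adj x v)}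

@[simp]
lemma agreeSet_compl : Gᶜ.agreeSet u v = G.agreeSet u v := by
  ext x
  simp +contextual only [agreeSet, compl_adj, Set.mem_ofPred_eq, ne_eq, not_false_eq_true,
    true_and, and_congr_right_iff, not_iff_not, implies_true]

def Iso.compl (f : G ≃g H) : Gᶜ ≃g Hᶜ where
  toEquiv := f.toEquiv
  map_rel_iff' {a b} := by
    simp only [compl_adj]
    exact and_congr f.injective.ne_iff (not_congr f.map_adj_iff)

lemma Iso.image_agreeSet (f : G ≃g H) (u v : V) :
    f '' G.agreeSet u v = H.agreeSet (f u) (f v) := by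
  ext y
  obtain ⟨x, rfl⟩ := f.surjective y
  rw [f.injective.mem_set_image]
  simp only [agreeSet, Set.mem_ofPred_eq, f.map_adj_iff, f.injective.ne_iff]

lemma compl_neighborSet_union_subset (c c' : V) :
    (G.neighborSet c ∪ G.neighborSet c')ᶜ ⊆ G.agreeSet c c' ∪ {c, c'} := by
  intro x hx
  simp only [Set.mem_compl_iff, Set.mem_union, mem_neighborSet, not_or] at hx
  by_cases hxc : x = c
  · simp [hxc]
  by_cases hxc' : x = c'
  · simp [hxc']
  exact Or.inl ⟨hxc, hxc', by simp [G.adj_comm x, hx.1, hx.2]⟩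

section EdgeAgreement

variable [Infinite V] (hfin : ∀ u v, G.Adj u v → (G.agreeSet u v).Finite)
include hfin

lemma not_adj_of_adj_of_adj (huv : G.Adj u v) (huw : G.Adj u w) : ¬ G.Adj v w := by
  intro hvw
  have hS : (G.agreeSet u v ∪ G.agreeSet u w ∪ G.agreeSet v w ∪ {u, v, w}).Finite :=
    (((hfin u v huv).union (hfin u w huw)).union (hfin v w hvw)).union (by simp)
  -- a vertex outside `hS` would be adjacent to exactly one end of each edge of the triangle
  obtain ⟨x, hx⟩ := hS.infinite_compl.nonempty
  simp only [agreeSet, Set.mem_compl_iff, Set.mem_union, Set.mem_insert_iff,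
    Set.mem_singleton_iff, Set.mem_ofPred_eq, not_or, not_and] at hx
  obtain ⟨⟨⟨h₁, h₂⟩, h₃⟩, hxu, hxv, hxw⟩ := hx
  have := h₁ hxu hxv
  have := h₂ hxu hxw
  have := h₃ hxv hxw
  tauto

lemma finite_neighborSet_diff (h : (G.neighborSet v ∩ G.neighborSet w).Infinite) :
    (G.neighborSet w \ G.neighborSet v).Finite := by
  obtain ⟨x, hxv, hxw⟩ := h.nonempty
  refine ((hfin v x hxv).union (Set.toFinite {v, x})).subset ?_
  rintro y ⟨hyw, hyv⟩
  have hxy : ¬ G.Adj x y := not_adj_of_adj_of_adj hfin hxw hyw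
  exact compl_neighborSet_union_subset v x (by simp_all)

lemma finite_neighborSet_diff_of_adj (hcc : G.Adj c c') (hw : G.Adj w c') :
    (G.neighborSet w \ G.neighborSet c).Finite := by
  refine ((hfin c c' hcc).union (Set.toFinite {c, c'})).subset fun y ⟨hyw, hyc⟩ ↦ ?_
  refine compl_neighborSet_union_subset c c' ?_
  have hyc' : ¬ G.Adj c' y := not_adj_of_adj_of_adj hfin hw hyw
  simp_all [G.adj_comm c']

variable (hvt : ∀ u v, SameOrbit G u v)
include hvt

lemma infinite_neighborSet (hcc : G.Adj c c') (v : V) : (G.neighborSet v).Infinite := by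
  have hunion : (G.neighborSet c ∪ G.neighborSet c').Infinite := by
    rw [← compl_compl (G.neighborSet c ∪ _)]
    exact (((hfin c c' hcc).union (Set.toFinite _)).subset
      (compl_neighborSet_union_subset c c')).infinite_compl
  obtain ⟨d, hd⟩ : ∃ d, (G.neighborSet d).Infinite := by
    by_contra! h
    exact hunion ((h c).union (h c'))
  obtain ⟨g, rfl⟩ := hvt d v
  rw [← g.image_neighborSet]
  exact hd.image g.injective.injOn

variable
    (hnon : ∀ x y u v, x ≠ y → u ≠ v → ¬ G.Adj x y → ¬ G.Adj u v → SamePairOrbit G x y u v)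
include hnon

lemma infinite_neighborSet_inter_of_not_adj (hcc : G.Adj c c') (hxy : x ≠ y) (hn : ¬ G.Adj x y) :
    (G.neighborSet x ∩ G.neighborSet y).Infinite := by
  obtain ⟨w, hwc', hwc⟩ :=
    ((infinite_neighborSet hfin hvt hcc c').sdiff (Set.finite_singleton c)).nonempty
  have hinf : (G.neighborSet w ∩ G.neighborSet c).Infinite := by
    rw [← Set.sdiff_sdiff_right_self]
    exact (infinite_neighborSet hfin hvt hcc w).sdiff
      (finite_neighborSet_diff_of_adj hfin hcc hwc'.symm)
  obtain ⟨g, rfl, rfl⟩ := hnon w c x y hwc hxy (not_adj_of_adj_of_adj hfin hwc' hcc.symm) hn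
  rw [← g.image_neighborSet, ← g.image_neighborSet, ← Set.image_inter g.injective]
  exact hinf.image g.injective.injOn

lemma agreeSet_eq_empty_of_adj (hcc : G.Adj c c') : G.agreeSet c c' = ∅ := by
  refine Set.eq_empty_of_forall_notMem fun a ⟨hac, hac', hadj⟩ ↦ ?_
  have hnac : ¬ G.Adj a c := fun h ↦ not_adj_of_adj_of_adj hfin h.symm hcc (hadj.1 h)
  have hnac' : ¬ G.Adj a c' := hnac ∘ hadj.2
  have hcofin : (G.neighborSet a)ᶜ.Finite := by
    have h₁ := finite_neighborSet_diff hfin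
      (infinite_neighborSet_inter_of_not_adj hfin hvt hnon hcc hac hnac)
    have h₂ := finite_neighborSet_diff hfin
      (infinite_neighborSet_inter_of_not_adj hfin hvt hnon hcc hac' hnac')
    refine ((h₁.union h₂).union (((hfin c c' hcc).union (Set.toFinite {c, c'})))).subset ?_
    intro x hx
    by_cases hxN : x ∈ G.neighborSet c ∪ G.neighborSet c'
    · exact Or.inl (hxN.imp (⟨·, hx⟩) (⟨·, hx⟩))
    · exact Or.inr (compl_neighborSet_union_subset c c' hxN)
  obtain ⟨b, hab⟩ := (infinite_neighborSet hfin hvt hcc a).nonempty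
  refine infinite_neighborSet hfin hvt hcc b (hcofin.subset fun y hby hay ↦ ?_)
  exact not_adj_of_adj_of_adj hfin hab hay hby

end EdgeAgreement

end SimpleGraph

section Homogeneity

variable {V : Type*} {M : SimpleGraph V} {n : ℕ}

lemma IsNHom.exists_eqOn (h : IsNHom M n) {s : Set V} (hs : s.Finite) (hn : s.ncard = n)
    {φ : V → V} (hinj : s.InjOn φ)
    (hadj : ∀ u ∈ s, ∀ v ∈ s, M.Adj (φ u) (φ v) ↔ M.Adj u v) :
    ∃ g : M ≃g M, s.EqOn g φ := by
  let f : M.induce s ≃g M.induce (φ '' s) :=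
    ⟨hinj.bijOn_image.equiv φ, fun {a b} ↦ hadj a a.2 b b.2⟩
  obtain ⟨g, hg⟩ := h s (φ '' s) hs (hs.image φ) hn (by rwa [hinj.ncard_image]) f
  exact ⟨g, fun x hx ↦ hg ⟨x, hx⟩⟩

lemma IsNHom.sameOrbit (h : IsNHom M 1) (u v : V) : SameOrbit M u v := by
  obtain ⟨g, hg⟩ := h.exists_eqOn (s := {u}) (φ := fun _ ↦ v) (Set.toFinite _)
    (Set.ncard_singleton u) (Set.injOn_singleton _ _) (by simp)
  exact ⟨g, hg rfl⟩

lemma IsNHom.samePairOrbit (h : IsNHom M 2) {x y u v : V} (hxy : x ≠ y) (huv : u ≠ v)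
    (hadj : M.Adj x y ↔ M.Adj u v) : SamePairOrbit M x y u v := by
  classical
  obtain ⟨g, hg⟩ := h.exists_eqOn (s := {x, y}) (φ := fun z ↦ if z = x then u else v)
    (Set.toFinite _) (Set.ncard_pair hxy) (by simp [Set.InjOn, hxy.symm, huv, huv.symm])
    (by simp [hxy.symm, hadj, M.adj_comm v u, M.adj_comm y x])
  exact ⟨g, by simpa using hg (Set.mem_insert x {y}),
    by simpa [hxy.symm] using hg (Set.mem_insert_of_mem x rfl)⟩

lemma SameOrbit.compl {u v : V} (h : SameOrbit M u v) : SameOrbit Mᶜ u v :=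
  let ⟨g, hg⟩ := h; ⟨g.compl, hg⟩

lemma SamePairOrbit.compl {x y u v : V} (h : SamePairOrbit M x y u v) :
    SamePairOrbit Mᶜ x y u v :=
  let ⟨g, hx, hy⟩ := h; ⟨g.compl, hx, hy⟩

lemma SamePairOrbit.finite_agreeSet {x y u v : V} (h : SamePairOrbit M x y u v)
    (hfin : (M.agreeSet x y).Finite) : (M.agreeSet u v).Finite := by
  obtain ⟨g, rfl, rfl⟩ := h
  rw [← g.image_agreeSet]
  exact hfin.image g

lemma agreeSet_eq_empty_of_finite [Infinite V] (h1 : IsNHom M 1) (h2 : IsNHom M 2) {c c' : V}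
    (hne : c ≠ c') (hfin : (M.agreeSet c c').Finite) : M.agreeSet c c' = ∅ := by
  have hfin' {u v : V} (huv : u ≠ v) (hadj : M.Adj u v ↔ M.Adj c c') :
      (M.agreeSet u v).Finite :=
    (h2.samePairOrbit hne huv hadj.symm).finite_agreeSet hfin
  by_cases hcc : M.Adj c c'
  · refine agreeSet_eq_empty_of_adj (fun u v huv ↦ hfin' huv.ne (iff_of_true huv hcc))
      h1.sameOrbit (fun x y u v hxy huv hnxy hnuv ↦ ?_) hcc
    exact h2.samePairOrbit hxy huv (iff_of_false hnxy hnuv)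
  · rw [← agreeSet_compl]
    refine agreeSet_eq_empty_of_adj (fun u v huv ↦ ?_) (fun u v ↦ (h1.sameOrbit u v).compl)
      (fun x y u v hxy huv hnxy hnuv ↦ ?_) ⟨hne, hcc⟩
    · rw [agreeSet_compl]
      exact hfin' huv.1 (iff_of_false huv.2 hcc)
    · simp only [compl_adj, hxy, huv, ne_eq, not_false_eq_true, true_and, not_not] at hnxy hnuv
      exact (h2.samePairOrbit hxy huv (iff_of_true hnxy hnuv)).compl

lemma exists_aut_eqOn_id_of_infinite_agreeSet {k : ℕ} (hM : GeqHom M k) {c c' : V}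
    (hinf : (M.agreeSet c c').Infinite) {F : Set V} (hF : F.Finite)
    (hFc : F ⊆ M.agreeSet c c') : ∃ g : M ≃g M, F.EqOn g id ∧ g c = c' := by
  classical
  obtain ⟨F', hFF', hF'c, hF'card⟩ :=
    hinf.exists_superset_ncard_eq hFc hF (k := F.ncard + k + 1) (by omega)
  have hF'fin : F'.Finite := Set.finite_of_ncard_pos (by omega)
  have hcF' : c ∉ F' := fun h ↦ (hF'c h).1 rfl
  have hc'F' : c' ∉ F' := fun h ↦ (hF'c h).2.1 rfl
  have hagree {x : V} (hx : x ∈ F') : x ≠ c ∧ (M.Adj c x ↔ M.Adj c' x) := by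
    obtain ⟨hxc, -, hadj⟩ := hF'c hx
    exact ⟨hxc, by rw [M.adj_comm c, M.adj_comm c', hadj]⟩
  obtain ⟨g, hg⟩ := (hM _ (by omega : k ≤ F'.ncard + 1)).exists_eqOn (hF'fin.insert c)
    (Set.ncard_insert_of_notMem hcF' hF'fin) (φ := fun x ↦ if x = c then c' else x)
    (by
      rintro x (rfl | hx) y (rfl | hy) hxy
      · rfl
      · simp_all [(hagree hy).1]
      · simp_all [(hagree hx).1]
      · simpa [(hagree hx).1, (hagree hy).1] using hxy)
    (by
      rintro x (rfl | hx) y (rfl | hy)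
      · simp
      · simp [(hagree hy).1, (hagree hy).2]
      · simp [(hagree hx).1, M.adj_comm x, (hagree hx).2]
      · simp [(hagree hx).1, (hagree hy).1])
  refine ⟨g, fun x hx ↦ ?_, by simpa using hg (Set.mem_insert c F')⟩
  simpa [(hagree (hFF' hx)).1] using hg (Set.mem_insert_of_mem c (hFF' hx))

lemma exists_aut_eqOn_id_of_agree [Infinite V] {k : ℕ} (hM : GeqHom M k) (h1 : IsNHom M 1)
    (h2 : IsNHom M 2) {F : Set V} (hF : F.Finite) {c c' : V} (hcF : c ∉ F) (hc'F : c' ∉ F)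
    (hagree : ∀ v ∈ F, M.Adj v c ↔ M.Adj v c') :
    ∃ g : M ≃g M, F.EqOn g id ∧ g c = c' := by
  obtain rfl | hne := eq_or_ne c c'
  · exact ⟨.refl, fun _ _ ↦ rfl, rfl⟩
  have hFc : F ⊆ M.agreeSet c c' := fun v hv ↦
    ⟨fun h ↦ hcF (h ▸ hv), fun h ↦ hc'F (h ▸ hv), hagree v hv⟩
  by_cases hinf : (M.agreeSet c c').Infinite
  · exact exists_aut_eqOn_id_of_infinite_agreeSet hM hinf hF hFc
  · obtain rfl : F = ∅ := Set.subset_eq_empty hFc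
      (agreeSet_eq_empty_of_finite h1 h2 hne (Set.not_infinite.mp hinf))
    obtain ⟨g, hg⟩ := h1.sameOrbit c c'
    exact ⟨g, Set.eqOn_empty _ _, hg⟩

lemma exists_aut_eqOn [Infinite V] {k : ℕ} (hM : GeqHom M k) (h1 : IsNHom M 1)
    (h2 : IsNHom M 2) {s : Set V} (hs : s.Finite) {φ : V → V} (hinj : s.InjOn φ)
    (hadj : ∀ u ∈ s, ∀ v ∈ s, M.Adj (φ u) (φ v) ↔ M.Adj u v) :
    ∃ g : M ≃g M, s.EqOn g φ := by
  induction s, hs using Set.Finite.induction_on with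
  | empty => exact ⟨.refl, Set.eqOn_empty _ _⟩
  | @insert a s has hs ih =>
    obtain ⟨g, hg⟩ := ih (hinj.mono (Set.subset_insert a s))
      (fun u hu v hv ↦ hadj u (.inr hu) v (.inr hv))
    have hga : g a ∉ φ '' s := by
      rintro ⟨w, hw, hwa⟩
      rw [← hg hw] at hwa
      exact has (g.injective hwa ▸ hw)
    have hφa : φ a ∉ φ '' s := fun ⟨w, hw, hwa⟩ ↦
      has (hinj (.inr hw) (.inl rfl) hwa ▸ hw)
    obtain ⟨h, hfix, hh⟩ := exists_aut_eqOn_id_of_agree hM h1 h2 (hs.image φ) hga hφa <| by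
      rintro _ ⟨w, hw, rfl⟩
      rw [← hg hw, g.map_adj_iff, ← hadj w (.inr hw) a (.inl rfl), hg hw]
    refine ⟨g.trans h, ?_⟩
    rintro x (rfl | hx)
    · exact hh
    · simp only [RelIso.trans_apply, hg hx]
      exact hfix (Set.mem_image_of_mem φ hx)

end Homogeneity

theorem stmt19_general {V : Type} [Infinite V] (M : SimpleGraph V) (k : ℕ)
    (hM : GeqHom M k) (h1 : IsNHom M 1) (h2 : IsNHom M 2) :
    IsHomogeneous M := by
  classical
  intro n s t hs _ _ _ f
  let φ : V → V := fun x ↦ if hx : x ∈ s then f ⟨x, hx⟩ else x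
  have hφ {x : V} (hx : x ∈ s) : φ x = f ⟨x, hx⟩ := dif_pos hx
  obtain ⟨g, hg⟩ := exists_aut_eqOn hM h1 h2 hs (φ := φ)
    (fun x hx y hy hxy ↦ by
      rw [hφ hx, hφ hy] at hxy
      exact congrArg Subtype.val (f.injective (Subtype.ext hxy)))
    (fun x hx y hy ↦ by rw [hφ hx, hφ hy]; exact f.map_adj_iff)
  exact ⟨g, fun ⟨x, hx⟩ ↦ (hg hx).trans (hφ hx)⟩

theorem stmt19 {V : Type} [Countable V] [Infinite V] (M : SimpleGraph V) (k : ℕ)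
    (hM : GeqHom M k) (h1 : IsNHom M 1) (h2 : IsNHom M 2) :
    IsHomogeneous M :=
  stmt19_general M k hM h1 h2
end
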